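/- Let f : ℝ⁴ → ℝ be a smooth nowhere-vanishing function, X the 2×2 coordinate matrix, and A(f) = −(1/f)(∂f/∂X) dX the t'Hooft ansatz connection potential. Then the curvature F(f) = dA(f) + A(f)∧A(f) is anti-self-dual (i.e., the coefficients of dx11∧dx21, dx12∧dx22, and dx11∧dx22 + dx12∧dx21 vanish) if and only if □_{2,2} f = ∂²f/∂x11∂x22 − ∂²f/∂x12∂x21 = 0. -/

import Mathlib

open Matrix

/-- ℝ⁴ identified with M₂(ℝ) via coordinates x (i,j) = x_{ij}. -/
abbrev E : Type := Fin 2 × Fin 2 → ℝ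

/-- Partial derivative with respect to the coordinate x_p. -/
noncomputable def pder (p : Fin 2 × Fin 2) (f : E → ℝ) (x : E) : ℝ :=
  deriv (fun t : ℝ => f (x + t • (Pi.single p (1 : ℝ) : E))) 0

/-- The coordinate matrix X. -/
def Xof (x : E) : Matrix (Fin 2) (Fin 2) ℝ := Matrix.of fun i j => x (i, j)

/-- The matrix ∂f/∂X, with (∂f/∂X)_{ij} = ∂f/∂x_{ji}. -/
noncomputable def Dmat (f : E → ℝ) (x : E) : Matrix (Fin 2) (Fin 2) ℝ :=
  Matrix.of fun i j => pder (j, i) f x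

/-- The dx_p-component of the t'Hooft ansatz potential A(f) = −(1/f)(∂f/∂X) dX. -/
noncomputable def Apot (f : E → ℝ) (p : Fin 2 × Fin 2) (x : E) :
    Matrix (Fin 2) (Fin 2) ℝ :=
  (-(f x)⁻¹) • (Dmat f x * Matrix.single p.1 p.2 (1 : ℝ))

/-- The dx_p ∧ dx_q component of the curvature F(f) = dA(f) + A(f) ∧ A(f). -/
noncomputable def curv (f : E → ℝ) (p q : Fin 2 × Fin 2) (x : E) :
    Matrix (Fin 2) (Fin 2) ℝ :=
  (Matrix.of fun i j =>
    pder p (fun y => Apot f q y i j) x - pder q (fun y => Apot f p y i j) x)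
    + (Apot f p x * Apot f q x - Apot f q x * Apot f p x)

lemma hasDerivAt_line (x v : E) (t : ℝ) :
    HasDerivAt (fun t : ℝ => x + t • v) v t := by
  simpa using ((hasDerivAt_id t).smul_const v).const_add x

lemma hasDerivAt_pder_line (f : E → ℝ) (x v : E) (hf : DifferentiableAt ℝ f x) :
    HasDerivAt (fun t : ℝ => f (x + t • v)) (fderiv ℝ f x v) 0 := by
  have hline := hasDerivAt_line x v 0
  have hf' : HasFDerivAt f (fderiv ℝ f x) (x + (0:ℝ) • v) := by
    simpa using hf.hasFDerivAt
  exact hf'.comp_hasDerivAt (x := (0:ℝ)) hline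

lemma diff_line (f : E → ℝ) (x v : E) (hf : DifferentiableAt ℝ f x) :
    DifferentiableAt ℝ (fun t : ℝ => f (x + t • v)) 0 :=
  (hasDerivAt_pder_line f x v hf).differentiableAt

lemma pder_eq (f : E → ℝ) (p : Fin 2 × Fin 2) (x : E) (hf : DifferentiableAt ℝ f x) :
    pder p f x = fderiv ℝ f x (Pi.single p 1) :=
  (hasDerivAt_pder_line f x _ hf).deriv

lemma contDiff_pder (f : E → ℝ) (hf : ContDiff ℝ (⊤ : ℕ∞) f) (p : Fin 2 × Fin 2) :
    ContDiff ℝ (⊤ : ℕ∞) (pder p f) := by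
  have : pder p f = fun x => fderiv ℝ f x (Pi.single p 1) :=
    funext fun x => pder_eq f p x (hf.differentiable (by simp) x)
  rw [this]
  exact (hf.fderiv_right (by simp)).clm_apply contDiff_const

lemma pder_const (p : Fin 2 × Fin 2) (c : ℝ) (x : E) : pder p (fun _ => c) x = 0 := by
  simp [pder]

lemma pder_comm (f : E → ℝ) (hf : ContDiff ℝ (⊤ : ℕ∞) f) (p q : Fin 2 × Fin 2) (x : E) :
    pder p (pder q f) x = pder q (pder p f) x := by
  have hd : Differentiable ℝ f := hf.differentiable (by simp)
  have hfd : ContDiff ℝ (⊤ : ℕ∞) (fderiv ℝ f) := hf.fderiv_right (by simp)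
  have key : ∀ r s : Fin 2 × Fin 2, pder r (pder s f) x =
      fderiv ℝ (fderiv ℝ f) x (Pi.single r 1) (Pi.single s 1) := by
    intro r s
    have h1 : pder s f = fun y => fderiv ℝ f y (Pi.single s 1) :=
      funext fun y => pder_eq f s y (hd y)
    rw [h1, pder_eq _ r x ((hfd.clm_apply contDiff_const).differentiable (by simp) x)]
    rw [fderiv_clm_apply ((hfd.differentiable (by simp)) x) (differentiableAt_const _)]
    simp
  rw [key p q, key q p]
  exact second_derivative_symmetric (fun y => (hd y).hasFDerivAt)
    ((hfd.differentiable (by simp)) x).hasFDerivAt _ _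

lemma pder_neg_inv_mul (f g : E → ℝ) (p : Fin 2 × Fin 2) (x : E)
    (hf : DifferentiableAt ℝ f x) (hg : DifferentiableAt ℝ g x) (h0 : f x ≠ 0) :
    pder p (fun y => -(f y)⁻¹ * g y) x =
      (f x)⁻¹ ^ 2 * pder p f x * g x - (f x)⁻¹ * pder p g x := by
  set v : E := Pi.single p (1:ℝ) with hv
  have hF : DifferentiableAt ℝ (fun t : ℝ => f (x + t • v)) 0 := diff_line f x v hf
  have hG : DifferentiableAt ℝ (fun t : ℝ => g (x + t • v)) 0 := diff_line g x v hg
  have h0' : f (x + (0:ℝ) • v) ≠ 0 := by simpa using h0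
  have : pder p (fun y => -(f y)⁻¹ * g y) x =
      deriv (fun t : ℝ => -(f (x + t • v))⁻¹ * g (x + t • v)) 0 := rfl
  rw [this, deriv_fun_mul (c := fun t : ℝ => -(f (x + t • v))⁻¹) (hF.inv h0').neg hG]
  rw [deriv.fun_neg, deriv_fun_inv'' hF h0']
  have e1 : deriv (fun t : ℝ => f (x + t • v)) 0 = pder p f x := rfl
  have e2 : deriv (fun t : ℝ => g (x + t • v)) 0 = pder p g x := rfl
  rw [e1, e2]
  have : x + (0:ℝ) • v = x := by simp
  rw [this]
  field_simp
  ring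

lemma Apot_apply (f : E → ℝ) (p : Fin 2 × Fin 2) (x : E) (i j : Fin 2) :
    Apot f p x i j = if j = p.2 then -(f x)⁻¹ * pder (p.1, i) f x else 0 := by
  simp only [Apot, Dmat, Matrix.smul_apply, mul_apply, of_apply, Matrix.single, smul_eq_mul]
  by_cases hj : j = p.2
  · subst hj
    simp [Finset.mul_sum, Finset.sum_ite_eq, eq_comm]
  · simp [hj, fun k => show ¬(p.1 = k ∧ p.2 = j) from fun h => hj h.2.symm]

lemma Apot_mul_apply (f : E → ℝ) (p q : Fin 2 × Fin 2) (x : E) (i j : Fin 2) :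
    (Apot f p x * Apot f q x) i j =
      if j = q.2 then (f x)⁻¹ ^ 2 * pder (p.1, i) f x * pder (q.1, p.2) f x else 0 := by
  rw [mul_apply]
  by_cases hj : j = q.2
  · simp only [Apot_apply, hj, if_pos rfl]
    rw [Finset.sum_eq_single p.2]
    · simp; ring
    · intro k _ hk; simp [hk]
    · simp
  · simp [Apot_apply, hj]

lemma pder_Apot (f : E → ℝ) (hf : ContDiff ℝ (⊤ : ℕ∞) f) (hf0 : ∀ x, f x ≠ 0)
    (p q : Fin 2 × Fin 2) (x : E) (i j : Fin 2) :
    pder p (fun y => Apot f q y i j) x =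
      if j = q.2 then
        (f x)⁻¹ ^ 2 * pder p f x * pder (q.1, i) f x -
          (f x)⁻¹ * pder p (pder (q.1, i) f) x
      else 0 := by
  by_cases hj : j = q.2
  · rw [if_pos hj]
    have : (fun y => Apot f q y i j) = fun y => -(f y)⁻¹ * pder (q.1, i) f y := by
      funext y; rw [Apot_apply, if_pos hj]
    rw [this]
    exact pder_neg_inv_mul f _ p x (hf.differentiable (by simp) x)
      ((contDiff_pder f hf _).differentiable (by simp) x) (hf0 x)
  · rw [if_neg hj]
    have : (fun y => Apot f q y i j) = fun _ => (0:ℝ) := by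
      funext y; rw [Apot_apply, if_neg hj]
    rw [this, pder_const]

lemma curv_entry (f : E → ℝ) (hf : ContDiff ℝ (⊤ : ℕ∞) f) (hf0 : ∀ x, f x ≠ 0)
    (p q : Fin 2 × Fin 2) (x : E) (i j : Fin 2) :
    curv f p q x i j =
      (if j = q.2 then
        (f x)⁻¹ ^ 2 * pder p f x * pder (q.1, i) f x -
          (f x)⁻¹ * pder p (pder (q.1, i) f) x +
          (f x)⁻¹ ^ 2 * pder (p.1, i) f x * pder (q.1, p.2) f x
      else 0) -
      (if j = p.2 then
        (f x)⁻¹ ^ 2 * pder q f x * pder (p.1, i) f x -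
          (f x)⁻¹ * pder q (pder (p.1, i) f) x +
          (f x)⁻¹ ^ 2 * pder (q.1, i) f x * pder (p.1, q.2) f x
      else 0) := by
  simp only [curv, Matrix.add_apply, of_apply, Matrix.sub_apply, Apot_mul_apply,
    pder_Apot f hf hf0]
  split_ifs <;> ring

/-- For smooth nowhere-vanishing f, the curvature of the t'Hooft ansatz potential is
    anti-self-dual iff f satisfies the ultrahyperbolic equation □_{2,2} f = 0. -/
theorem tHooft_ansatz_asd_iff_ultrahyperbolic (f : E → ℝ)
    (hf : ContDiff ℝ (⊤ : ℕ∞) f) (hf0 : ∀ x, f x ≠ 0) :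
    (∀ x : E,
        curv f ((0 : Fin 2), (0 : Fin 2)) ((1 : Fin 2), (0 : Fin 2)) x = 0 ∧
        curv f ((0 : Fin 2), (1 : Fin 2)) ((1 : Fin 2), (1 : Fin 2)) x = 0 ∧
        curv f ((0 : Fin 2), (0 : Fin 2)) ((1 : Fin 2), (1 : Fin 2)) x +
          curv f ((0 : Fin 2), (1 : Fin 2)) ((1 : Fin 2), (0 : Fin 2)) x = 0) ↔
      (∀ x : E,
        pder ((0 : Fin 2), (0 : Fin 2)) (pder ((1 : Fin 2), (1 : Fin 2)) f) x -
          pder ((0 : Fin 2), (1 : Fin 2)) (pder ((1 : Fin 2), (0 : Fin 2)) f) x = 0) := by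
  have hinv : ∀ x : E, (f x)⁻¹ ≠ 0 := fun x => inv_ne_zero (hf0 x)
  constructor
  · intro h x
    have h1 := (h x).1
    have e := curv_entry f hf hf0 (0, 0) (1, 0) x 1 0
    rw [h1] at e
    simp only [Matrix.zero_apply, ↓reduceIte] at e
    have hsw := pder_comm f hf (1, 0) (0, 1) x
    rw [hsw] at e
    have e2 : (f x)⁻¹ * (pder ((0:Fin 2), (1:Fin 2)) (pder ((1:Fin 2), (0:Fin 2)) f) x -
        pder ((0:Fin 2), (0:Fin 2)) (pder ((1:Fin 2), (1:Fin 2)) f) x) = 0 := by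
      linear_combination -e
    rcases mul_eq_zero.1 e2 with h' | h'
    · exact absurd h' (hinv x)
    · linarith
  · intro h x
    have hx := h x
    have hsw1 := pder_comm f hf (1, 0) (0, 0) x
    have hsw2 := pder_comm f hf (1, 0) (0, 1) x
    have hsw3 := pder_comm f hf (1, 1) (0, 0) x
    have hsw4 := pder_comm f hf (1, 1) (0, 1) x
    have h10 : ¬(1:Fin 2) = 0 := by decide
    have h01 : ¬(0:Fin 2) = 1 := by decide
    refine ⟨?_, ?_, ?_⟩ <;> ext i j <;>
      simp only [curv_entry f hf hf0, Matrix.add_apply, Matrix.zero_apply] <;>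
      fin_cases i <;> fin_cases j <;>
      simp only [Fin.mk_zero, Fin.mk_one, Fin.isValue, ↓reduceIte, h10, h01, if_false, ite_false, hsw1, hsw2, hsw3, hsw4] <;>
      first
        | linear_combination (f x)⁻¹ * hx
        | linear_combination (-(f x)⁻¹) * hx
        | ring
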